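/- Let k be a field, 𝔤 a Lie algebra over k, 𝔥 an abelian Lie subalgebra of 𝔤, and α : 𝔥 → k a linear functional. Let f ∈ 𝔤 be a nonzero element with [h, f] = α(h)·f for all h ∈ 𝔥, and assume ad(f) is locally nilpotent on 𝔤, so that S = {ι(f)^n : n ∈ ℕ} is an Ore set of regular elements of U(𝔤) and, for every 𝔤-module M, the Ore localization S⁻¹M exists as a module over S⁻¹U(𝔤) and hence over 𝔤. If M is a 𝔤-module that is the direct sum of its 𝔥-weight spaces, then for every linear functional λ : 𝔥 → k such that the λ-weight space of S⁻¹M is nonzero, there exist μ in the support of M and n ∈ ℕ with λ = μ − n·α; that is, supp(S⁻¹M) ⊆ supp(M) + ℤ^{≤0}·α. -/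

import Mathlib

/-!
Write a weight vector of `S⁻¹M` as `m /ₒ fⁿ`. Since `h fⁿ = fⁿ (h + n α(h))` in `U(g)`, its weight
equation with weight `λ` says that `h • m - (λ + n α)(h) • m` is killed by a power of `f`.
Decompose `m` into weight components `m_μ`; they cannot all be `f`-torsion, as `m /ₒ fⁿ ≠ 0`.
Since `f^K` maps `M^μ` into `M^(μ + K α)` and these spaces are independent,
`(μ - λ - n α)(h) • f^K m_μ = 0` for every component, so a non-torsion component has
`μ = λ + n α`.
-/

open OreLocalization

variable (k : Type*) [Field k] (g : Type*) [LieRing g] [LieAlgebra k g]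
  (H : LieSubalgebra k g)
  (M : Type*) [AddCommGroup M] [Module (UniversalEnvelopingAlgebra k g) M]

/-- The `μ`-weight space of the `U(g)`-module `M` with respect to the subalgebra `H`,
as an additive subgroup: `{v : ι(h) • v = μ(h) • v for all h ∈ H}`. -/
def wtAddSubgroup (μ : ↥H →ₗ[k] k) : AddSubgroup M where
  carrier := {v | ∀ h : H, (UniversalEnvelopingAlgebra.ι k (h : g)) • v
      = algebraMap k (UniversalEnvelopingAlgebra k g) (μ h) • v}
  add_mem' := by
    intro a b ha hb h
    rw [smul_add, smul_add, ha h, hb h]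
  zero_mem' := by
    intro h
    rw [smul_zero, smul_zero]
  neg_mem' := by
    intro a ha h
    rw [smul_neg, smul_neg, ha h]

theorem iSupIndep.addSubgroup_eq_zero_of_finsetSum_eq_zero {ι N : Type*} [AddCommGroup N]
    {p : ι → AddSubgroup N} (hp : iSupIndep p) {s : Finset ι} {v : ι → N}
    (hv : ∀ i ∈ s, v i ∈ p i) (hsum : ∑ i ∈ s, v i = 0) : ∀ i ∈ s, v i = 0 := by
  rw [← iSupIndep_map_orderIso_iff (AddSubgroup.toIntSubmodule : AddSubgroup N ≃o _)] at hp
  exact (iSupIndep_iff_finsetSum_eq_zero_imp_eq_zero _).1 hp s v hv hsum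

theorem exists_pow_smul_sum_eq_zero {R N ι : Type*} [Monoid R] [AddCommMonoid N]
    [DistribMulAction R N] (F : R) (s : Finset ι) (v : ι → N)
    (hv : ∀ i ∈ s, ∃ K : ℕ, F ^ K • v i = 0) : ∃ K : ℕ, F ^ K • ∑ i ∈ s, v i = 0 := by
  classical
  induction s using Finset.induction_on with
  | empty => exact ⟨0, by simp⟩
  | insert a s ha ih =>
    obtain ⟨K₁, hK₁⟩ := hv a (Finset.mem_insert_self a s)
    obtain ⟨K₂, hK₂⟩ := ih fun i hi => hv i (Finset.mem_insert_of_mem hi)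
    refine ⟨K₁ + K₂, ?_⟩
    rw [Finset.sum_insert ha, smul_add]
    nth_rw 1 [add_comm K₁]
    rw [pow_add, pow_add, mul_smul, mul_smul, hK₁, hK₂, smul_zero, smul_zero, add_zero]

theorem mul_pow_eq_pow_mul_add_nsmul {A : Type*} [Ring A] {x y a : A} (ha : Commute a y)
    (h : x * y = y * (x + a)) (K : ℕ) : x * y ^ K = y ^ K * (x + K • a) := by
  induction K with
  | zero => simp
  | succ K ih =>
    calc x * y ^ (K + 1) = y ^ K * (x * y + K • a * y) := by
          rw [pow_succ, ← mul_assoc, ih, mul_assoc, add_mul]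
      _ = y ^ K * (y * (x + a) + y * K • a) := by rw [h, ((ha.smul_left K).eq)]
      _ = y ^ (K + 1) * (x + (K + 1) • a) := by
          rw [← mul_add, ← mul_assoc, ← pow_succ, succ_nsmul, add_assoc, add_comm a]

theorem OreLocalization.exists_smul_eq_of_smul_oreDiv_eq {R X : Type*} [Monoid R]
    {S : Submonoid R} [OreSet S] [MulAction R X] {x y x' y' : R} {m : X} {s : S}
    (hx : x * s = s * x') (hy : y * s = s * y') (h : x' • (m /ₒ s) = y' • (m /ₒ s)) :
    ∃ u ∈ S, u • x • m = u • y • m := by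
  have hm : (m /ₒ (1 : S)) = (s : R) • (m /ₒ s) := by
    rw [← oreDiv_one_smul, OreLocalization.smul_cancel]
  have hxy : (x • m) /ₒ (1 : S) = (y • m) /ₒ (1 : S) := by
    rw [← smul_oreDiv_one, ← smul_oreDiv_one, hm, smul_smul, smul_smul, hx, hy, mul_smul,
      mul_smul, h]
  obtain ⟨u, v, huv, hu⟩ := oreDiv_eq_iff.1 hxy
  simp only [OneMemClass.coe_one, mul_one] at hu
  rw [Submonoid.smul_def, hu] at huv
  exact ⟨v, hu ▸ u.2, huv.symm⟩

theorem OreLocalization.oreDiv_eq_zero_of_smul_eq_zero {R X : Type*} [Monoid R]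
    {S : Submonoid R} [OreSet S] [AddMonoid X] [DistribMulAction R X] {u : R} (hu : u ∈ S)
    {m : X} (hm : u • m = 0) (s : S) : m /ₒ s = 0 := by
  rw [OreLocalization.expand m s u (S.mul_mem hu s.2), hm, zero_oreDiv]

theorem algebraMap_smul_smul_comm {R A N : Type*} [CommSemiring R] [Semiring A] [Algebra R A]
    [AddCommMonoid N] [Module A N] (c : R) (a : A) (v : N) :
    algebraMap R A c • a • v = a • algebraMap R A c • v := by
  rw [← mul_smul, Algebra.commutes, mul_smul]

local notation "U" => UniversalEnvelopingAlgebra k g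
local notation "ι" => UniversalEnvelopingAlgebra.ι k

section Weights

variable {k g H M}

attribute [local instance] LieRing.ofAssociativeRing

theorem ι_mul_ι_pow_of_lie_eq_smul {x f : g} {a : k} (hxf : ⁅x, f⁆ = a • f) (K : ℕ) :
    ι x * ι f ^ K = ι f ^ K * (ι x + algebraMap k U (K • a)) := by
  have hlie : ι x * ι f - ι f * ι x = algebraMap k U a * ι f := by
    rw [← Ring.lie_def, ← (ι).map_lie, hxf, map_smul, Algebra.smul_def]
  rw [map_nsmul]
  refine mul_pow_eq_pow_mul_add_nsmul (Algebra.commutes a (ι f)) ?_ K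
  rw [mul_add, ← Algebra.commutes, ← hlie, add_sub_cancel]

theorem algebraMap_smul_mem_wtAddSubgroup {μ : ↥H →ₗ[k] k} {v : M}
    (hv : v ∈ wtAddSubgroup k g H M μ) (c : k) :
    algebraMap k U c • v ∈ wtAddSubgroup k g H M μ := fun h => by
  rw [← algebraMap_smul_smul_comm, hv h, algebraMap_smul_smul_comm]

theorem ι_pow_smul_mem_wtAddSubgroup {α : ↥H →ₗ[k] k} {f : g}
    (hroot : ∀ h : H, ⁅(h : g), f⁆ = α h • f) {μ : ↥H →ₗ[k] k} {v : M}
    (hv : v ∈ wtAddSubgroup k g H M μ) (K : ℕ) :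
    ι f ^ K • v ∈ wtAddSubgroup k g H M (μ + K • α) := fun h => by
  rw [← mul_smul, ι_mul_ι_pow_of_lie_eq_smul (hroot h), mul_smul, add_smul, hv h, ← add_smul,
    ← map_add, algebraMap_smul_smul_comm, LinearMap.add_apply, LinearMap.smul_apply]

theorem exists_ι_pow_smul_eq_of_smul_oreDiv_eq {x f : g} {a c : k} (hxf : ⁅x, f⁆ = a • f)
    [OreSet (Submonoid.powers (ι f))] {m : M} {s : Submonoid.powers (ι f)} {n : ℕ}
    (hn : ι f ^ n = s) (hw : ι x • (m /ₒ s) = algebraMap k U c • (m /ₒ s)) :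
    ∃ K : ℕ, ι f ^ K • ι x • m = ι f ^ K • algebraMap k U (c + n • a) • m := by
  have hcomm : (ι x - algebraMap k U (n • a)) * s = s * ι x := by
    rw [← hn, sub_mul, ι_mul_ι_pow_of_lie_eq_smul hxf, mul_add, Algebra.commutes,
      add_sub_cancel_right]
  obtain ⟨_, ⟨K, rfl⟩, hK⟩ := exists_smul_eq_of_smul_oreDiv_eq hcomm (Algebra.commutes c _) hw
  refine ⟨K, ?_⟩
  rw [sub_smul, smul_sub, sub_eq_iff_eq_add, ← smul_add, ← add_smul, ← map_add] at hK
  exact hK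

theorem apply_eq_of_ι_pow_smul_sum_eq (hindep : iSupIndep (wtAddSubgroup k g H M))
    {α : ↥H →ₗ[k] k} {f : g} (hroot : ∀ h : H, ⁅(h : g), f⁆ = α h • f)
    {T : Finset (↥H →ₗ[k] k)} {v : (↥H →ₗ[k] k) → M}
    (hv : ∀ μ ∈ T, v μ ∈ wtAddSubgroup k g H M μ) {h : H} {c : k} {K : ℕ}
    (hK : ι f ^ K • ι (h : g) • ∑ μ ∈ T, v μ = ι f ^ K • algebraMap k U c • ∑ μ ∈ T, v μ)
    {μ₀ : ↥H →ₗ[k] k} (hμ₀ : μ₀ ∈ T) (hne : ι f ^ K • v μ₀ ≠ 0) : μ₀ h = c := by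
  have hterm : ∀ μ ∈ T, ι f ^ K • ι (h : g) • v μ - ι f ^ K • algebraMap k U c • v μ
      = algebraMap k U (μ h - c) • ι f ^ K • v μ := fun μ hμ => by
    rw [hv μ hμ h, ← smul_sub, ← sub_smul, ← map_sub, algebraMap_smul_smul_comm]
  have hsum : ∑ μ ∈ T, algebraMap k U (μ h - c) • ι f ^ K • v μ = 0 := by
    rw [← Finset.sum_congr rfl hterm, Finset.sum_sub_distrib, ← Finset.smul_sum,
      ← Finset.smul_sum, ← Finset.smul_sum, ← Finset.smul_sum, hK, sub_self]
  -- `ι f ^ K` shifts the weights by `K • α`, injectively, so the summands stay independent.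
  have hzero :=
    (hindep.comp (add_left_injective (K • α))).addSubgroup_eq_zero_of_finsetSum_eq_zero
      (fun μ hμ => algebraMap_smul_mem_wtAddSubgroup
        (ι_pow_smul_mem_wtAddSubgroup hroot (hv μ hμ) K) _) hsum μ₀ hμ₀
  by_contra hμ₀c
  exact hne (((sub_ne_zero.2 hμ₀c).isUnit.map (algebraMap k U)).smul_eq_zero.1 hzero)

end Weights

theorem stmt_15 [DecidableEq (↥H →ₗ[k] k)]
    (α : ↥H →ₗ[k] k) (f : g)
    (hroot : ∀ h : H, ⁅(h : g), f⁆ = α h • f)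
    [OreSet (Submonoid.powers (UniversalEnvelopingAlgebra.ι k f))]
    (hM : DirectSum.IsInternal fun μ : ↥H →ₗ[k] k => wtAddSubgroup k g H M μ)
    (lam : ↥H →ₗ[k] k)
    (hlam : ∃ w : OreLocalization
        (Submonoid.powers (UniversalEnvelopingAlgebra.ι k f)) M,
      w ≠ 0 ∧ ∀ h : H,
        ((UniversalEnvelopingAlgebra.ι k (h : g)
            : UniversalEnvelopingAlgebra k g) /ₒ (1 : Submonoid.powers (UniversalEnvelopingAlgebra.ι k f))) • w
          = ((algebraMap k (UniversalEnvelopingAlgebra k g) (lam h)) /ₒ (1 : Submonoid.powers (UniversalEnvelopingAlgebra.ι k f))) • w) :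
    ∃ (μ : ↥H →ₗ[k] k) (n : ℕ),
      (∃ v : M, v ≠ 0 ∧ ∀ h : H,
        (UniversalEnvelopingAlgebra.ι k (h : g)) • v
          = algebraMap k (UniversalEnvelopingAlgebra k g) (μ h) • v) ∧
      lam = μ - (n : ℕ) • α := by
  classical
  obtain ⟨w, hw0, hw⟩ := hlam
  induction w using OreLocalization.ind with | _ m s
  obtain ⟨n, hn : ι f ^ n = s⟩ := s.2
  have htors (h : H) :
      ∃ K : ℕ, ι f ^ K • ι (h : g) • m = ι f ^ K • algebraMap k U (lam h + n • α h) • m :=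
    exists_ι_pow_smul_eq_of_smul_oreDiv_eq (hroot h) hn (by simpa only [oreDiv_one_smul] using hw h)
  obtain ⟨z, rfl⟩ := hM.surjective m
  rw [DirectSum.coeAddMonoidHom_eq_dfinsuppSum] at htors hw0
  obtain ⟨μ₀, hμ₀, hfree⟩ : ∃ μ ∈ z.support, ∀ K : ℕ, ι f ^ K • (z μ : M) ≠ 0 := by
    by_contra! hall
    obtain ⟨K, hK⟩ := exists_pow_smul_sum_eq_zero (ι f) _ _ hall
    exact hw0 (oreDiv_eq_zero_of_smul_eq_zero (Submonoid.pow_mem _ (Submonoid.mem_powers _) K) hK _)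
  refine ⟨μ₀, n, ⟨z μ₀, by simpa using hfree 0, (z μ₀).2⟩, LinearMap.ext fun h => ?_⟩
  obtain ⟨K, hK⟩ := htors h
  have hμ₀h := apply_eq_of_ι_pow_smul_sum_eq hM.addSubgroup_iSupIndep hroot
    (fun μ _ => (z μ).2) hK hμ₀ (hfree K)
  simp [hμ₀h]
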